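/- Let G be a one-dimensional simplicial complex that is a Barycentric refinement, with connection matrix L and g = L^{-1}. Then the off-diagonal structure of g is: g(x,y) = 1 if x ⊊ y or y ⊊ x; g(x,y) = -1 if x,y are distinct vertices joined by an edge of G; g(x,y) = 0 if x,y are distinct edges, and g(x,y) = 0 if dim(x) ≠ dim(y) and x ∩ y = ∅. -/

import Mathlib

/-!
Index the connection matrix by the vertices and the edges of the graph and let `N` be the
vertex–edge incidence matrix. Vertices meet only themselves, a vertex meets exactly the edges
containing it, and two distinct edges of a simple graph share at most one vertex, so
`L = [[1, N], [Nᵀ, NᵀN - 1]]`. Such a block matrix has the explicit inverse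
`[[1 - NNᵀ, N], [Nᵀ, -1]]`, whose entries are read off from the incidences: `NNᵀ(x, y)` counts
the edges through both `x` and `y`, which is one edge for adjacent `x ≠ y`.
-/

open Finset Matrix

namespace Matrix

variable {m n R : Type*} [Fintype m] [Fintype n] [DecidableEq m] [DecidableEq n]

theorem fromBlocks_one_mul_fromBlocks_one_sub_mul [Ring R] (N : Matrix m n R)
    (P : Matrix n m R) :
    fromBlocks 1 N P (P * N - 1) * fromBlocks (1 - N * P) N P (-1) = 1 := by
  rw [fromBlocks_multiply, ← fromBlocks_one]
  congr 1 <;> simp [Matrix.mul_sub, Matrix.sub_mul, Matrix.mul_assoc]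

theorem isUnit_det_fromBlocks_one_mul_sub_one [CommRing R] (N : Matrix m n R)
    (P : Matrix n m R) : IsUnit (fromBlocks 1 N P (P * N - 1)).det :=
  isUnit_det_of_right_inverse (fromBlocks_one_mul_fromBlocks_one_sub_mul N P)

theorem inv_fromBlocks_one_mul_sub_one [CommRing R] (N : Matrix m n R) (P : Matrix n m R) :
    (fromBlocks 1 N P (P * N - 1))⁻¹ = fromBlocks (1 - N * P) N P (-1) :=
  inv_eq_right_inv (fromBlocks_one_mul_fromBlocks_one_sub_mul N P)

end Matrix

theorem Finset.natCast_card_eq_ite_nonempty {α R : Type*} [NonAssocSemiring R] {t : Finset α}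
    (ht : #t ≤ 1) : (#t : R) = if t.Nonempty then 1 else 0 := by
  split_ifs with hne
  · rw [le_antisymm ht hne.card_pos, Nat.cast_one]
  · rw [not_nonempty_iff_eq_empty.mp hne, card_empty, Nat.cast_zero]

section SetFamily

variable {α ι κ : Type*} [DecidableEq α] (R : Type*) [NonAssocSemiring R]

def memMatrix (s : ι → Finset α) : Matrix α ι R :=
  of fun a i => if a ∈ s i then 1 else 0

def connectionMatrix (S : κ → Finset α) : Matrix κ κ R :=
  of fun i j => if (S i ∩ S j).Nonempty then 1 else 0

variable {R}

theorem transpose_memMatrix_mul_memMatrix_apply [Fintype α] (s : ι → Finset α) (i j : ι) :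
    ((memMatrix R s)ᵀ * memMatrix R s) i j = #(s i ∩ s j) := by
  simp only [memMatrix, mul_apply, transpose_apply, of_apply, ite_mul, one_mul, zero_mul,
    ← ite_and, sum_boole, ← mem_inter, filter_mem_eq_inter, univ_inter]

theorem memMatrix_mul_transpose_memMatrix_apply [Fintype ι] (s : ι → Finset α) (a b : α) :
    (memMatrix R s * (memMatrix R s)ᵀ) a b = #{i | a ∈ s i ∧ b ∈ s i} := by
  simp only [memMatrix, mul_apply, transpose_apply, of_apply, ite_mul, one_mul, zero_mul,
    ← ite_and, sum_boole]

end SetFamily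

section PairFamily

variable {α ι : Type*} [Fintype α] [DecidableEq α] [DecidableEq ι] {s : ι → Finset α}

theorem connectionMatrix_sumElim_singleton {R : Type*} [Ring R] (hcard : ∀ i, #(s i) = 2)
    (hinter : Pairwise fun i j => #(s i ∩ s j) ≤ 1) :
    connectionMatrix R (Sum.elim (fun a => {a}) s) =
      fromBlocks 1 (memMatrix R s) (memMatrix R s)ᵀ ((memMatrix R s)ᵀ * memMatrix R s - 1) := by
  ext (a | i) (b | j)
  · simp [connectionMatrix, one_apply, Finset.Nonempty]
  · simp [connectionMatrix, memMatrix, Finset.Nonempty]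
  · simp [connectionMatrix, memMatrix, Finset.Nonempty]
  · simp only [connectionMatrix, of_apply, Sum.elim_inr, fromBlocks_apply₂₂, Matrix.sub_apply,
      transpose_memMatrix_mul_memMatrix_apply, one_apply]
    obtain rfl | hij := eq_or_ne i j
    · have hne : (s i).Nonempty := card_pos.mp (by rw [hcard]; norm_num)
      simp only [inter_self, if_pos hne, hcard]
      norm_num
    · rw [if_neg hij, sub_zero, natCast_card_eq_ite_nonempty (hinter hij)]
      -- the two sides differ only in their `Decidable` instances
      rfl

variable [Fintype ι]

theorem isUnit_det_connectionMatrix_sumElim_singleton {R : Type*} [CommRing R]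
    (hcard : ∀ i, #(s i) = 2) (hinter : Pairwise fun i j => #(s i ∩ s j) ≤ 1) :
    IsUnit (connectionMatrix R (Sum.elim (fun a => {a}) s)).det := by
  rw [connectionMatrix_sumElim_singleton hcard hinter]
  exact isUnit_det_fromBlocks_one_mul_sub_one _ _

theorem inv_connectionMatrix_sumElim_singleton {R : Type*} [CommRing R]
    (hcard : ∀ i, #(s i) = 2) (hinter : Pairwise fun i j => #(s i ∩ s j) ≤ 1) :
    (connectionMatrix R (Sum.elim (fun a => {a}) s))⁻¹ =
      fromBlocks (1 - memMatrix R s * (memMatrix R s)ᵀ) (memMatrix R s) (memMatrix R s)ᵀ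
        (-1) := by
  rw [connectionMatrix_sumElim_singleton hcard hinter, inv_fromBlocks_one_mul_sub_one]

end PairFamily

section Sym2Family

variable {α ι : Type*} [DecidableEq α] {σ : ι → Sym2 α}

theorem card_toFinset_inter_toFinset_le_one (hσ : Function.Injective σ) {i j : ι}
    (hij : i ≠ j) : #((σ i).toFinset ∩ (σ j).toFinset) ≤ 1 := by
  by_contra! hlt
  obtain ⟨a, ha, b, hb, hab⟩ := one_lt_card.mp hlt
  simp only [mem_inter, Sym2.mem_toFinset] at ha hb
  have hi := (Sym2.mem_and_mem_iff hab).mp ⟨ha.1, hb.1⟩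
  have hj := (Sym2.mem_and_mem_iff hab).mp ⟨ha.2, hb.2⟩
  exact hij (hσ (hi.trans hj.symm))

theorem filter_mem_toFinset_and_mem_toFinset [Fintype ι] {a b : α} (hab : a ≠ b) :
    ({i | a ∈ (σ i).toFinset ∧ b ∈ (σ i).toFinset} : Finset ι) =
      ({i | σ i = s(a, b)} : Finset ι) := by
  simp only [Sym2.mem_toFinset, Sym2.mem_and_mem_iff hab]

end Sym2Family

theorem green_function_entries_1dim_general {V : Type*} [DecidableEq V]
    (K : Finset (Finset V))
    (Γ : SimpleGraph {x // x ∈ K})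
    (E : Type*) [Fintype E] [DecidableEq E]
    (t h : E → {x // x ∈ K})
    (hth : ∀ e, Γ.Adj (t e) (h e))
    (hbij : ∀ u v, Γ.Adj u v → ∃! e, s(t e, h e) = s(u, v))
    (ends : ({x // x ∈ K} ⊕ E) → Finset {x // x ∈ K})
    (hends : ∀ z, ends z = Sum.elim (fun x => ({x} : Finset {x // x ∈ K}))
      (fun e => {t e, h e}) z)
    (L : Matrix ({x // x ∈ K} ⊕ E) ({x // x ∈ K} ⊕ E) ℝ)
    (hL : ∀ z w, L z w = if (ends z ∩ ends w).Nonempty then 1 else 0) :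
    IsUnit L.det ∧
    (∀ x e, (x = t e ∨ x = h e) →
      L⁻¹ (Sum.inl x) (Sum.inr e) = 1 ∧ L⁻¹ (Sum.inr e) (Sum.inl x) = 1) ∧
    (∀ x y, x ≠ y → Γ.Adj x y → L⁻¹ (Sum.inl x) (Sum.inl y) = -1) ∧
    (∀ e f, e ≠ f → L⁻¹ (Sum.inr e) (Sum.inr f) = 0) ∧
    (∀ x e, ¬(x = t e ∨ x = h e) →
      L⁻¹ (Sum.inl x) (Sum.inr e) = 0 ∧ L⁻¹ (Sum.inr e) (Sum.inl x) = 0) := by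
  set σ : E → Sym2 {x // x ∈ K} := fun e => s(t e, h e)
  set N := memMatrix ℝ fun e => (σ e).toFinset
  have hσ : Function.Injective σ := fun e f hef => by
    obtain ⟨_, -, huniq⟩ := hbij (t f) (h f) (hth f)
    exact (huniq e hef).trans (huniq f rfl).symm
  have hcard (e : E) : #(σ e).toFinset = 2 :=
    Sym2.card_toFinset_of_not_isDiag _ (Sym2.mk_isDiag_iff.not.mpr (hth e).ne)
  have hinter : Pairwise fun e f => #((σ e).toFinset ∩ (σ f).toFinset) ≤ 1 :=
    fun _ _ => card_toFinset_inter_toFinset_le_one hσ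
  have hLc : L = connectionMatrix ℝ (Sum.elim (fun x => {x}) fun e => (σ e).toFinset) := by
    ext z w
    simp only [hL, hends, connectionMatrix, of_apply, σ, Sym2.toFinset_mk_eq]
  have hinv : L⁻¹ = fromBlocks (1 - N * Nᵀ) N Nᵀ (-1) :=
    hLc ▸ inv_connectionMatrix_sumElim_singleton hcard hinter
  have hN (x : {x // x ∈ K}) (e : E) : N x e = if x = t e ∨ x = h e then 1 else 0 := by
    simp [N, memMatrix, σ, Sym2.mem_toFinset]
  refine ⟨hLc ▸ isUnit_det_connectionMatrix_sumElim_singleton hcard hinter, ?_, ?_, ?_, ?_⟩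
  · intro x e hx
    simp [hinv, hN, hx]
  · intro x y hxy hadj
    have hone : #{e | σ e = s(x, y)} = 1 :=
      card_eq_one_iff_existsUnique.mpr <| by
        simpa only [mem_filter, mem_univ, true_and] using hbij x y hadj
    rw [hinv, fromBlocks_apply₁₁, Matrix.sub_apply, one_apply_ne hxy,
      memMatrix_mul_transpose_memMatrix_apply, filter_mem_toFinset_and_mem_toFinset hxy, hone]
    norm_num
  · intro e f hef
    simp [hinv, hef]
  · intro x e hx
    simp [hinv, hN, hx]

/-- Off-diagonal structure of the Green function `g = L⁻¹` for a
one-dimensional Barycentric refined complex: `g(x,y) = 1` if one simplex is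
strictly contained in the other (a vertex of an edge), `g(x,y) = -1` for two
distinct vertices joined by an edge, `g(x,y) = 0` for two distinct edges, and
`g(x,y) = 0` for a vertex and an edge which are disjoint. -/
theorem green_function_entries_1dim {V : Type*} [Fintype V] [DecidableEq V]
    (K : Finset (Finset V))
    (hK1 : ∀ x ∈ K, x.card = 1 ∨ x.card = 2)
    (hKc : ∀ x ∈ K, ∀ y ⊆ x, y.Nonempty → y ∈ K)
    (Γ : SimpleGraph {x // x ∈ K}) [DecidableRel Γ.Adj]
    (hΓ : ∀ x y, Γ.Adj x y ↔ ((x : Finset V) ⊂ (y : Finset V) ∨ (y : Finset V) ⊂ (x : Finset V)))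
    (E : Type*) [Fintype E] [DecidableEq E]
    (t h : E → {x // x ∈ K})
    (hth : ∀ e, Γ.Adj (t e) (h e))
    (hbij : ∀ u v, Γ.Adj u v → ∃! e, s(t e, h e) = s(u, v))
    (ends : ({x // x ∈ K} ⊕ E) → Finset {x // x ∈ K})
    (hends : ∀ z, ends z = Sum.elim (fun x => ({x} : Finset {x // x ∈ K}))
      (fun e => {t e, h e}) z)
    (L : Matrix ({x // x ∈ K} ⊕ E) ({x // x ∈ K} ⊕ E) ℝ)
    (hL : ∀ z w, L z w = if (ends z ∩ ends w).Nonempty then 1 else 0) :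
    IsUnit L.det ∧
    (∀ x e, (x = t e ∨ x = h e) →
      L⁻¹ (Sum.inl x) (Sum.inr e) = 1 ∧ L⁻¹ (Sum.inr e) (Sum.inl x) = 1) ∧
    (∀ x y, x ≠ y → Γ.Adj x y → L⁻¹ (Sum.inl x) (Sum.inl y) = -1) ∧
    (∀ e f, e ≠ f → L⁻¹ (Sum.inr e) (Sum.inr f) = 0) ∧
    (∀ x e, ¬(x = t e ∨ x = h e) →
      L⁻¹ (Sum.inl x) (Sum.inr e) = 0 ∧ L⁻¹ (Sum.inr e) (Sum.inl x) = 0) :=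
  green_function_entries_1dim_general K Γ E t h hth hbij ends hends L hL
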